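/- arXiv:2601.21034 — 4 statements merged into one kernel-verified Lean document; each statement's English description precedes it below -/
import Mathlib

section
/- For any positive integers a, b, c, the Dedekind sum satisfies s(ac, bc) = s(a, b), where s(b,a) := Σ_{k=1}^{a} ((kb/a))·((k/a)). -/
open Classical

open Finset

/-- The sawtooth function `((x))`. -/
noncomputable def dp (x : ℝ) : ℝ := if ∃ m : ℤ, (m : ℝ) = x then 0 else Int.fract x - 1/2

/-- The Dedekind sum `s(b, a)` (no coprimality condition). -/
noncomputable def ded (b a : ℕ) : ℝ :=
  ∑ k ∈ Finset.Icc 1 a, dp ((k : ℝ) * b / a) * dp ((k : ℝ) / a)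

/-! Write `k = j b + r + 1` with `r < b`, `j < c`. The factor `((k a / b))` depends only on `r`,
and summing `((k / (b c))) = (((r + 1) / (b c) + j / c))` over `j` collapses by the distribution
relation `∑_{j < c} ((x + j / c)) = ((c x))`. Both sides of that relation are `1/c`-periodic in `x`,
and on `[0, 1/c)` every term with `j ≥ 1` has its argument in `(0, 1)`, where `((·))` is affine. -/

open Function

lemma dp_periodic : Periodic dp 1 := fun x => by
  have hint : (∃ m : ℤ, (m : ℝ) = x + 1) ↔ ∃ m : ℤ, (m : ℝ) = x :=
    ⟨fun ⟨m, hm⟩ => ⟨m - 1, by push_cast; linarith⟩,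
      fun ⟨m, hm⟩ => ⟨m + 1, by push_cast; linarith⟩⟩
  simp only [dp, hint, Int.fract_add_one]

lemma dp_of_mem_Ioo {x : ℝ} (h0 : 0 < x) (h1 : x < 1) : dp x = x - 1 / 2 := by
  have hx : ¬ ∃ m : ℤ, (m : ℝ) = x := by
    rintro ⟨m, rfl⟩
    have : (0 : ℤ) < m := by exact_mod_cast h0
    have : m < 1 := by exact_mod_cast h1
    omega
  rw [dp, if_neg hx, Int.fract_eq_self.2 ⟨h0.le, h1⟩]

lemma sum_range_natCast_add_one (n : ℕ) : ∑ j ∈ range n, ((j : ℝ) + 1) = n * (n + 1) / 2 := by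
  induction n with
  | zero => simp
  | succ n ih => rw [sum_range_succ, ih]; push_cast; ring

lemma sum_range_dp_add_div_of_mem_Ico {c : ℕ} (hc : 0 < c) {x : ℝ} (hx0 : 0 ≤ x)
    (hx1 : x < 1 / c) : ∑ j ∈ range c, dp (x + j / c) = dp (c * x) := by
  obtain ⟨n, rfl⟩ := Nat.exists_eq_add_one_of_ne_zero hc.ne'
  push_cast at hx1 ⊢
  have hterm : ∀ j ∈ range n, dp (x + ((j + 1 : ℕ) : ℝ) / (n + 1))
      = x + ((j : ℝ) + 1) / (n + 1) - 1 / 2 := by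
    intro j hj
    have hjn : (j : ℝ) + 1 ≤ n := by exact_mod_cast mem_range.1 hj
    push_cast
    apply dp_of_mem_Ioo (by positivity)
    rw [lt_div_iff₀ (by positivity)] at hx1
    rw [← sub_pos]
    field_simp
    nlinarith
  have hsum : ∑ j ∈ range (n + 1), dp (x + (j : ℝ) / (n + 1)) = n * x + dp x := by
    rw [sum_range_succ', sum_congr rfl hterm, sum_sub_distrib, sum_add_distrib, ← sum_div,
      sum_range_natCast_add_one]
    simp only [sum_const, card_range, nsmul_eq_mul, Nat.cast_zero, zero_div, add_zero]
    field_simp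
    ring
  rw [hsum]
  rcases hx0.eq_or_lt with rfl | hx
  · simp
  · have hnx : ((n : ℝ) + 1) * x < 1 := by rwa [lt_div_iff₀ (by positivity), mul_comm] at hx1
    have hx1' : x < 1 := by nlinarith [(by positivity : (0 : ℝ) ≤ n * x)]
    rw [dp_of_mem_Ioo hx hx1', dp_of_mem_Ioo (by positivity) hnx]
    ring

lemma periodic_sum_range_dp_add_div (c : ℕ) :
    Periodic (fun x => ∑ j ∈ range c, dp (x + j / c)) (1 / c) := fun x => by
  obtain rfl | hc := eq_or_ne c 0
  · simp
  have hc' : (c : ℝ) ≠ 0 := by exact_mod_cast hc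
  have hshift : ∀ j : ℕ, x + 1 / c + j / c = x + (j + 1 : ℕ) / c := by
    intro j; push_cast; ring
  have hwrap : dp (x + c / c) = dp (x + (0 : ℕ) / c) := by
    simpa [hc'] using dp_periodic x
  have h := sum_range_succ' (fun j : ℕ => dp (x + j / c)) c
  rw [sum_range_succ] at h
  simp only [hshift]
  linarith

theorem sum_range_dp_add_div {c : ℕ} (hc : 0 < c) (x : ℝ) :
    ∑ j ∈ range c, dp (x + j / c) = dp (c * x) := by
  have hper : Periodic (fun x => ∑ j ∈ range c, dp (x + j / c) - dp (c * x)) (1 / c) :=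
    (periodic_sum_range_dp_add_div c).sub (by simpa using dp_periodic.const_mul (c : ℝ))
  obtain ⟨y, ⟨hy0, hy1⟩, hy⟩ := hper.exists_mem_Ico₀ (by positivity) x
  have := sum_range_dp_add_div_of_mem_Ico hc hy0 hy1
  linarith

lemma sum_range_mul_eq_sum_sum {M : Type*} [AddCommMonoid M] (f : ℕ → M) (b c : ℕ) :
    ∑ i ∈ range (b * c), f i = ∑ j ∈ range c, ∑ r ∈ range b, f (j * b + r) := by
  induction c with
  | zero => simp
  | succ c ih =>
    rw [Nat.mul_succ, sum_range_add, ih, sum_range_succ, Nat.mul_comm b c]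

lemma ded_eq_sum_range (b a : ℕ) :
    ded b a = ∑ k ∈ range a, dp ((k + 1 : ℕ) * b / a) * dp ((k + 1 : ℕ) / a) := by
  rw [ded, range_eq_Ico, sum_Ico_add' (fun k : ℕ => dp ((k : ℝ) * b / a) * dp ((k : ℝ) / a))]
  rfl

theorem ded_mul_right_general (a b c : ℕ) (hc : 0 < c) :
    ded (a * c) (b * c) = ded a b := by
  have hc' : (c : ℝ) ≠ 0 := by positivity
  rw [ded_eq_sum_range, ded_eq_sum_range, sum_range_mul_eq_sum_sum, sum_comm]
  refine sum_congr rfl fun r hr => ?_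
  have hb : (b : ℝ) ≠ 0 := Nat.cast_ne_zero.2 (ne_zero_of_lt (mem_range.1 hr))
  calc ∑ j ∈ range c, dp ((j * b + r + 1 : ℕ) * (a * c : ℕ) / (b * c : ℕ))
        * dp ((j * b + r + 1 : ℕ) / (b * c : ℕ))
      = ∑ j ∈ range c, dp ((r + 1 : ℕ) * a / b) * dp ((r + 1 : ℕ) / (b * c) + j / c) := by
        refine sum_congr rfl fun j _ => ?_
        have hperiod : ((j * b + r + 1 : ℕ) : ℝ) * (a * c : ℕ) / (b * c : ℕ)
            = (r + 1 : ℕ) * a / b + (j * a : ℤ) * 1 := by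
          push_cast; field_simp; ring
        rw [hperiod, dp_periodic.int_mul]
        congr 2
        push_cast; field_simp; ring
    _ = dp ((r + 1 : ℕ) * a / b) * dp ((r + 1 : ℕ) / b) := by
        rw [← mul_sum, sum_range_dp_add_div hc]
        congr 2
        field_simp

theorem ded_mul_right (a b c : ℕ) (ha : 0 < a) (hb : 0 < b) (hc : 0 < c) :
    ded (a * c) (b * c) = ded a b :=
  ded_mul_right_general a b c hc
end

section
/- For any integer n > 1, Σ_{d₁|n} Σ_{d₂|n} μ(d₁)μ(d₂)·(d₁d₂/n²)·gcd(n/d₁, n/d₂)² = 2^{ω(n)}·φ(n)/n. -/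
/-!
With Jordan's totient `J₂ = μ * id²` one has `gcd(a, b)² = ∑_{e ∣ gcd(a, b)} J₂(e)`. Inserting this
and exchanging the order of summation, `n²` times the sum becomes `(J₂ * g²)(n)`, where
`g(m) = ∑_{d ∣ m} μ(d) d = ∏_{p ∣ m} (1 - p)`. This convolution and `2^ω φ · id` are both
multiplicative, and at `p^(k+1)` both equal `2 (p - 1) p^k p^(k+1)`.
-/

open ArithmeticFunction Finset
open scoped ArithmeticFunction.Moebius ArithmeticFunction.zeta

def jordanTwo : ArithmeticFunction ℤ := μ * (pow 2 : ArithmeticFunction ℕ)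

theorem isMultiplicative_jordanTwo : jordanTwo.IsMultiplicative :=
  isMultiplicative_moebius.mul isMultiplicative_pow.natCast

theorem sum_divisors_jordanTwo (m : ℕ) : ∑ e ∈ m.divisors, jordanTwo e = (m : ℤ) ^ 2 := by
  rw [← coe_mul_zeta_apply, jordanTwo, mul_comm, ← mul_assoc, coe_zeta_mul_moebius, one_mul,
    natCoe_apply, pow_apply]
  simp

theorem sq_gcd_eq_sum_jordanTwo {a b n : ℕ} (ha : a ∣ n) (hn : n ≠ 0) :
    ((a.gcd b : ℕ) : ℤ) ^ 2 = ∑ e ∈ n.divisors with e ∣ a ∧ e ∣ b, jordanTwo e := by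
  rw [← sum_divisors_jordanTwo,
    ← Nat.divisors_filter_dvd_of_dvd hn ((Nat.gcd_dvd_left a b).trans ha)]
  simp only [Nat.dvd_gcd_iff]

theorem sum_range_jordanTwo_prime_pow {p : ℕ} (hp : p.Prime) (k : ℕ) :
    ∑ i ∈ range (k + 1), jordanTwo (p ^ i) = ((p : ℤ) ^ k) ^ 2 := by
  rw [← Nat.sum_divisors_prime_pow hp, sum_divisors_jordanTwo]
  push_cast
  rfl

def moebiusIdSum : ArithmeticFunction ℤ :=
  moebius.pmul (ArithmeticFunction.id : ArithmeticFunction ℕ) * ζ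

theorem moebiusIdSum_apply (m : ℕ) : moebiusIdSum m = ∑ d ∈ m.divisors, μ d * d := by
  simp only [moebiusIdSum, coe_mul_zeta_apply, pmul_apply, natCoe_apply, id_apply]

theorem isMultiplicative_moebiusIdSum : moebiusIdSum.IsMultiplicative :=
  (isMultiplicative_moebius.pmul isMultiplicative_id.natCast).mul isMultiplicative_zeta.natCast

theorem moebiusIdSum_prime_pow_succ {p : ℕ} (hp : p.Prime) (k : ℕ) :
    moebiusIdSum (p ^ (k + 1)) = 1 - p := by
  have hvanish : ∀ i ∈ range k, μ (p ^ (i + 2)) * ((p ^ (i + 2) : ℕ) : ℤ) = 0 := fun i _ => by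
    rw [moebius_apply_prime_pow hp (by omega), if_neg (by omega), zero_mul]
  rw [moebiusIdSum_apply, Nat.sum_divisors_prime_pow hp, sum_range_succ', sum_range_succ',
    sum_eq_zero hvanish, zero_add, pow_one, pow_zero, moebius_apply_prime hp, moebius_apply_one]
  push_cast
  ring

theorem divisors_filter_dvd_div {e n : ℕ} (he : e ∣ n) :
    {d ∈ n.divisors | e ∣ n / d} = (n / e).divisors := by
  ext d
  simp only [mem_filter, Nat.mem_divisors]
  rcases eq_or_ne n 0 with rfl | hn
  · simp
  have hne : n / e ≠ 0 := (Nat.div_ne_zero_iff_of_dvd he).mpr ⟨hn, ne_zero_of_dvd_ne_zero hn he⟩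
  constructor
  · rintro ⟨⟨hd, -⟩, hed⟩
    exact ⟨by rwa [Nat.dvd_div_iff_mul_dvd he, mul_comm, ← Nat.dvd_div_iff_mul_dvd hd], hne⟩
  · rintro ⟨hd, -⟩
    have hdn : d ∣ n := hd.trans (Nat.div_dvd_of_dvd he)
    exact ⟨⟨hdn, hn⟩, by rwa [Nat.dvd_div_iff_mul_dvd hdn, mul_comm, ← Nat.dvd_div_iff_mul_dvd he]⟩

theorem sum_divisors_ite_dvd_div {e n : ℕ} (he : e ∣ n) :
    ∑ d ∈ n.divisors, (if e ∣ n / d then μ d * (d : ℤ) else 0) = moebiusIdSum (n / e) := by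
  rw [← sum_filter, divisors_filter_dvd_div he, moebiusIdSum_apply]

theorem sum_divisors_moebius_sq_gcd_eq_jordanTwo_mul (n : ℕ) :
    ∑ d₁ ∈ n.divisors, ∑ d₂ ∈ n.divisors,
        (μ d₁ : ℤ) * μ d₂ * (d₁ * d₂) * ((n / d₁).gcd (n / d₂) : ℤ) ^ 2 =
      (jordanTwo * moebiusIdSum.pmul moebiusIdSum) n := by
  rcases eq_or_ne n 0 with rfl | hn
  · simp
  calc _ = ∑ d₁ ∈ n.divisors, ∑ d₂ ∈ n.divisors, ∑ e ∈ n.divisors,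
        (if e ∣ n / d₁ then μ d₁ * (d₁ : ℤ) else 0) *
          (if e ∣ n / d₂ then μ d₂ * (d₂ : ℤ) else 0) * jordanTwo e := by
        refine sum_congr rfl fun d₁ hd₁ => sum_congr rfl fun d₂ _ => ?_
        rw [sq_gcd_eq_sum_jordanTwo (Nat.div_dvd_of_dvd (Nat.dvd_of_mem_divisors hd₁)) hn,
          mul_sum, sum_filter]
        refine sum_congr rfl fun e _ => ?_
        rw [ite_zero_mul_ite_zero, ite_zero_mul]
        split_ifs <;> ring
    _ = ∑ e ∈ n.divisors, ∑ d₁ ∈ n.divisors, ∑ d₂ ∈ n.divisors,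
        (if e ∣ n / d₁ then μ d₁ * (d₁ : ℤ) else 0) *
          (if e ∣ n / d₂ then μ d₂ * (d₂ : ℤ) else 0) * jordanTwo e :=
        (sum_congr rfl fun _ _ => sum_comm).trans sum_comm
    _ = ∑ e ∈ n.divisors, moebiusIdSum (n / e) * moebiusIdSum (n / e) * jordanTwo e := by
        refine sum_congr rfl fun e he => ?_
        rw [← sum_divisors_ite_dvd_div (Nat.dvd_of_mem_divisors he), sum_mul_sum, sum_mul]
        simp only [sum_mul]
    _ = _ := by
        rw [mul_apply, Nat.sum_divisorsAntidiagonal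
          (fun x y => jordanTwo x * (moebiusIdSum.pmul moebiusIdSum) y)]
        exact sum_congr rfl fun e _ => by rw [pmul_apply, mul_comm]

theorem isMultiplicative_jordanTwo_mul_sq_moebiusIdSum :
    (jordanTwo * moebiusIdSum.pmul moebiusIdSum).IsMultiplicative :=
  isMultiplicative_jordanTwo.mul
    (isMultiplicative_moebiusIdSum.pmul isMultiplicative_moebiusIdSum)

theorem jordanTwo_mul_sq_moebiusIdSum_prime_pow_succ {p : ℕ} (hp : p.Prime) (k : ℕ) :
    (jordanTwo * moebiusIdSum.pmul moebiusIdSum) (p ^ (k + 1)) =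
      2 * ((p : ℤ) - 1) * p ^ k * p ^ (k + 1) := by
  have htop : jordanTwo (p ^ (k + 1)) = ((p : ℤ) ^ (k + 1)) ^ 2 - ((p : ℤ) ^ k) ^ 2 := by
    rw [← sum_range_jordanTwo_prime_pow hp, ← sum_range_jordanTwo_prime_pow hp,
      sum_range_succ _ (k + 1)]
    ring
  have hlower : ∀ i ∈ range (k + 1),
      jordanTwo (p ^ i) * (moebiusIdSum.pmul moebiusIdSum) (p ^ (k + 1) / p ^ i) =
        jordanTwo (p ^ i) * (1 - p) ^ 2 := fun i hi => by
    rw [mem_range] at hi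
    obtain ⟨j, hj⟩ : ∃ j, k + 1 - i = j + 1 := ⟨k - i, by omega⟩
    rw [Nat.pow_div (by omega) hp.pos, hj, pmul_apply, moebiusIdSum_prime_pow_succ hp, sq]
  rw [mul_apply, Nat.sum_divisorsAntidiagonal
      (fun x y => jordanTwo x * (moebiusIdSum.pmul moebiusIdSum) y),
    Nat.sum_divisors_prime_pow hp, sum_range_succ, sum_congr rfl hlower, ← sum_mul,
    sum_range_jordanTwo_prime_pow hp, Nat.div_self (pow_pos hp.pos _),
    (isMultiplicative_moebiusIdSum.pmul isMultiplicative_moebiusIdSum).map_one, htop]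
  ring

def twoPowOmegaTotientMulId : ArithmeticFunction ℤ :=
  ⟨fun n => 2 ^ n.primeFactors.card * n.totient * n, by simp⟩

theorem twoPowOmegaTotientMulId_apply (n : ℕ) :
    twoPowOmegaTotientMulId n = 2 ^ n.primeFactors.card * n.totient * n := rfl

theorem isMultiplicative_twoPowOmegaTotientMulId :
    twoPowOmegaTotientMulId.IsMultiplicative := by
  refine ⟨by simp [twoPowOmegaTotientMulId_apply], fun {m n} hmn => ?_⟩
  simp only [twoPowOmegaTotientMulId_apply, hmn.primeFactors_mul,
    card_union_of_disjoint hmn.disjoint_primeFactors, Nat.totient_mul hmn]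
  push_cast
  ring

theorem twoPowOmegaTotientMulId_prime_pow_succ {p : ℕ} (hp : p.Prime) (k : ℕ) :
    twoPowOmegaTotientMulId (p ^ (k + 1)) = 2 * ((p : ℤ) - 1) * p ^ k * p ^ (k + 1) := by
  rw [twoPowOmegaTotientMulId_apply, Nat.primeFactors_prime_pow k.succ_ne_zero hp,
    Nat.totient_prime_pow_succ hp, card_singleton, Nat.cast_mul, Nat.cast_sub hp.one_le]
  push_cast
  ring

theorem jordanTwo_mul_sq_moebiusIdSum_eq :
    jordanTwo * moebiusIdSum.pmul moebiusIdSum = twoPowOmegaTotientMulId := by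
  refine (isMultiplicative_jordanTwo_mul_sq_moebiusIdSum.eq_iff_eq_on_prime_powers _ _
    isMultiplicative_twoPowOmegaTotientMulId).mpr fun p k hp => ?_
  cases k with
  | zero => simp [isMultiplicative_jordanTwo_mul_sq_moebiusIdSum.map_one,
      isMultiplicative_twoPowOmegaTotientMulId.map_one]
  | succ k => rw [jordanTwo_mul_sq_moebiusIdSum_prime_pow_succ hp,
      twoPowOmegaTotientMulId_prime_pow_succ hp]

theorem sum_divisors_moebius_sq_gcd_eq (n : ℕ) :
    ∑ d₁ ∈ n.divisors, ∑ d₂ ∈ n.divisors,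
        (μ d₁ : ℤ) * μ d₂ * (d₁ * d₂) * ((n / d₁).gcd (n / d₂) : ℤ) ^ 2 =
      2 ^ n.primeFactors.card * n.totient * n := by
  rw [sum_divisors_moebius_sq_gcd_eq_jordanTwo_mul, jordanTwo_mul_sq_moebiusIdSum_eq,
    twoPowOmegaTotientMulId_apply]

theorem delange_sum (n : ℕ) (hn : 1 < n) :
    ∑ d₁ ∈ n.divisors, ∑ d₂ ∈ n.divisors,
        (moebius d₁ : ℝ) * (moebius d₂ : ℝ) * ((d₁ : ℝ) * d₂ / (n : ℝ) ^ 2) *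
          (Nat.gcd (n / d₁) (n / d₂) : ℝ) ^ 2 =
      2 ^ (n.primeFactors.card) * (Nat.totient n : ℝ) / n := by
  have hn0 : (n : ℝ) ≠ 0 := Nat.cast_ne_zero.mpr (by omega)
  have hint := congrArg (Int.cast : ℤ → ℝ) (sum_divisors_moebius_sq_gcd_eq n)
  push_cast at hint
  calc _ = (∑ d₁ ∈ n.divisors, ∑ d₂ ∈ n.divisors,
        (μ d₁ : ℝ) * μ d₂ * (d₁ * d₂) * ((n / d₁).gcd (n / d₂) : ℝ) ^ 2) / (n : ℝ) ^ 2 := by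
        simp only [sum_div]
        exact sum_congr rfl fun _ _ => sum_congr rfl fun _ _ => by ring
    _ = _ := by
        rw [hint]
        field_simp
end

section
/- For any integer n > 1 with square-free part m (the product of the distinct primes dividing n), Σ_{a < n, gcd(a,n)=1} a² = (φ(n)/6)·(2n² + m·(-1)^{ω(m)}). -/
/-!
Möbius inversion over the divisors `d` of `n` turns the sum over residues coprime to `n` into
`∑_{d ∣ n} μ(d) d² S(n/d)`, where `6 S(N) = 6 ∑_{j<N} j² = N(N-1)(2N-1)`. With `N = n/d` the
summand becomes `μ(d) (2n² N - 3n² + n d) / 6`, and the three divisor sums are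
`∑ μ(d) n/d = φ(n)`, `∑ μ(d) = 0` (as `n > 1`) and `∑ μ(d) d = ∏_{p ∣ n} (1 - p)`; finally
`n ∏_{p ∣ n} (p - 1) = φ(n) ∏_{p ∣ n} p`.
-/

open Finset
open scoped ArithmeticFunction.Moebius

theorem six_mul_sum_range_sq {R : Type*} [CommRing R] (N : ℕ) :
    6 * ∑ j ∈ range N, (j : R) ^ 2 = N * (N - 1) * (2 * N - 1) := by
  induction N with
  | zero => simp
  | succ N ih =>
    rw [sum_range_succ, mul_add, ih]
    push_cast
    ring

theorem sum_divisors_moebius (n : ℕ) : ∑ d ∈ n.divisors, μ d = if n = 1 then 1 else 0 := by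
  rw [← ArithmeticFunction.coe_mul_zeta_apply, ArithmeticFunction.moebius_mul_coe_zeta,
    ArithmeticFunction.one_apply]

theorem divisors_filter_dvd_eq_divisors_gcd {n : ℕ} (hn : n ≠ 0) (a : ℕ) :
    {d ∈ n.divisors | d ∣ a} = (a.gcd n).divisors := by
  ext d
  rw [mem_filter, Nat.mem_divisors, Nat.mem_divisors, Nat.dvd_gcd_iff]
  have := Nat.gcd_ne_zero_right (m := a) hn
  tauto

theorem sum_filter_coprime_eq_sum_moebius_smul {M : Type*} [AddCommGroup M] {n : ℕ} (hn : n ≠ 0)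
    (s : Finset ℕ) (f : ℕ → M) :
    ∑ a ∈ s with a.Coprime n, f a = ∑ d ∈ n.divisors, μ d • ∑ a ∈ s with d ∣ a, f a := by
  calc ∑ a ∈ s with a.Coprime n, f a
      = ∑ a ∈ s, ∑ d ∈ n.divisors with d ∣ a, μ d • f a := by
        rw [sum_filter]
        refine sum_congr rfl fun a _ => ?_
        rw [← sum_smul, divisors_filter_dvd_eq_divisors_gcd hn, sum_divisors_moebius]
        by_cases h : a.Coprime n <;> simp [h, Nat.coprime_iff_gcd_eq_one]
    _ = ∑ d ∈ n.divisors, ∑ a ∈ s with d ∣ a, μ d • f a := by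
        simp only [sum_filter]
        exact sum_comm
    _ = ∑ d ∈ n.divisors, μ d • ∑ a ∈ s with d ∣ a, f a := by
        simp only [smul_sum]

theorem sum_range_mul_filter_dvd {M : Type*} [AddCommMonoid M] {d : ℕ} (hd : 0 < d) (N : ℕ)
    (f : ℕ → M) : ∑ a ∈ range (d * N) with d ∣ a, f a = ∑ j ∈ range N, f (d * j) := by
  refine (sum_nbij' (d * ·) (· / d) (fun j hj => ?_) (fun a ha => ?_) (fun j _ => ?_)
    (fun a ha => ?_) fun _ _ => rfl).symm
  · rw [mem_range] at hj
    exact mem_filter.2 ⟨mem_range.2 ((Nat.mul_lt_mul_left hd).2 hj), dvd_mul_right d j⟩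
  · obtain ⟨ha, k, rfl⟩ := mem_filter.1 ha
    rw [mem_range, Nat.mul_lt_mul_left hd] at ha
    rwa [mem_range, Nat.mul_div_cancel_left k hd]
  · exact Nat.mul_div_cancel_left j hd
  · exact Nat.mul_div_cancel' (mem_filter.1 ha).2

theorem totient_eq_sum_moebius_mul_div (n : ℕ) :
    (n.totient : ℤ) = ∑ d ∈ n.divisors, μ d * (n / d : ℕ) := by
  rcases eq_or_ne n 0 with rfl | hn
  · simp
  rw [Nat.totient_eq_card_coprime, card_eq_sum_ones, Nat.cast_sum, Nat.cast_one]
  simp_rw [Nat.coprime_comm (n := n)]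
  rw [sum_filter_coprime_eq_sum_moebius_smul hn]
  refine sum_congr rfl fun d hd => ?_
  obtain ⟨k, hk⟩ := Nat.dvd_of_mem_divisors hd
  have hd0 : 0 < d := Nat.pos_of_mem_divisors hd
  conv_lhs => rw [hk]
  rw [sum_range_mul_filter_dvd hd0, hk, Nat.mul_div_cancel_left _ hd0]
  simp

theorem squarefree_prod_primeFactors (n : ℕ) : Squarefree (∏ p ∈ n.primeFactors, p) :=
  Finset.squarefree_prod_of_pairwise_isCoprime
    (fun _ hp _ hq hpq => Nat.coprime_iff_isRelPrime.1 <| (Nat.coprime_primes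
      (Nat.prime_of_mem_primeFactors hp) (Nat.prime_of_mem_primeFactors hq)).2 hpq)
    fun _ hp => (Nat.prime_of_mem_primeFactors hp).squarefree

theorem sum_divisors_moebius_mul_eq_prod_one_sub {R : Type*} [CommRing R]
    {f : ArithmeticFunction R} (hf : f.IsMultiplicative) {n : ℕ} (hn : n ≠ 0) :
    ∑ d ∈ n.divisors, μ d * f d = ∏ p ∈ n.primeFactors, (1 - f p) := by
  set r := ∏ p ∈ n.primeFactors, p
  -- only squarefree divisors of `n` contribute, and these are exactly the divisors of `r`
  have hr : Squarefree r := squarefree_prod_primeFactors n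
  rw [← Nat.primeFactors_prod_primeFactors n, hf.prodPrimeFactors_one_sub_of_squarefree _ hr]
  refine (sum_subset (Nat.divisors_subset_of_dvd hn (Nat.prod_primeFactors_dvd n)) ?_).symm
  intro d hdn hdr
  suffices ¬Squarefree d by simp [ArithmeticFunction.moebius_eq_zero_of_not_squarefree this]
  intro hd
  refine hdr (Nat.mem_divisors.2 ⟨?_, hr.ne_zero⟩)
  rw [← Nat.prod_primeFactors_of_squarefree hd, Nat.prod_primeFactors_dvd_iff hr.ne_zero,
    Nat.primeFactors_prod_primeFactors]
  exact Nat.primeFactors_mono (Nat.dvd_of_mem_divisors hdn) hn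

theorem sum_divisors_moebius_mul_self {n : ℕ} (hn : n ≠ 0) :
    ∑ d ∈ n.divisors, μ d * (d : ℤ) = ∏ p ∈ n.primeFactors, (1 - (p : ℤ)) := by
  simpa using sum_divisors_moebius_mul_eq_prod_one_sub
    (ArithmeticFunction.isMultiplicative_id.natCast (R := ℤ)) hn

theorem six_mul_sum_range_filter_dvd_sq {R : Type*} [CommRing R] {d n : ℕ} (hd : d ∈ n.divisors) :
    6 * ∑ a ∈ range n with d ∣ a, (a : R) ^ 2 = 2 * n ^ 2 * (n / d : ℕ) - 3 * n ^ 2 + n * d := by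
  obtain ⟨k, rfl⟩ := Nat.dvd_of_mem_divisors hd
  have hd0 : 0 < d := Nat.pos_of_mem_divisors hd
  rw [sum_range_mul_filter_dvd hd0, Nat.mul_div_cancel_left _ hd0]
  have := six_mul_sum_range_sq (R := R) k
  push_cast at this ⊢
  simp only [mul_pow, ← mul_sum]
  linear_combination (d : R) ^ 2 * this

theorem six_mul_sum_sq_coprime {n : ℕ} (hn : 1 < n) :
    6 * ∑ a ∈ range n with a.Coprime n, (a : ℤ) ^ 2 =
      2 * n ^ 2 * n.totient + n * ∏ p ∈ n.primeFactors, (1 - (p : ℤ)) := by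
  have hn0 : n ≠ 0 := by omega
  rw [sum_filter_coprime_eq_sum_moebius_smul hn0, mul_sum]
  calc ∑ d ∈ n.divisors, 6 * μ d • ∑ a ∈ range n with d ∣ a, (a : ℤ) ^ 2
      = ∑ d ∈ n.divisors, μ d * (2 * n ^ 2 * (n / d : ℕ) - 3 * n ^ 2 + n * d) :=
        sum_congr rfl fun d hd => by
          rw [smul_eq_mul, mul_left_comm, six_mul_sum_range_filter_dvd_sq hd]
    _ = 2 * n ^ 2 * ∑ d ∈ n.divisors, μ d * (n / d : ℕ) - 3 * n ^ 2 * ∑ d ∈ n.divisors, μ d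
          + n * ∑ d ∈ n.divisors, μ d * (d : ℤ) := by
        simp only [mul_sum, ← sum_sub_distrib, ← sum_add_distrib]
        exact sum_congr rfl fun d _ => by ring
    _ = _ := by
        rw [← totient_eq_sum_moebius_mul_div, sum_divisors_moebius, if_neg hn.ne',
          sum_divisors_moebius_mul_self hn0]
        ring

theorem mul_prod_one_sub_primeFactors (n : ℕ) :
    (n : ℤ) * ∏ p ∈ n.primeFactors, (1 - (p : ℤ)) =
      (-1) ^ n.primeFactors.card * n.totient * ∏ p ∈ n.primeFactors, (p : ℤ) := by
  have h := congrArg (Nat.cast (R := ℤ)) (Nat.totient_mul_prod_primeFactors n)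
  rw [Nat.cast_mul, Nat.cast_mul, Nat.cast_prod, Nat.cast_prod,
    prod_congr rfl fun p hp => Nat.cast_sub (Nat.prime_of_mem_primeFactors hp).one_le,
    Nat.cast_one] at h
  have hsign : ∏ p ∈ n.primeFactors, (1 - (p : ℤ)) =
      (-1) ^ n.primeFactors.card * ∏ p ∈ n.primeFactors, ((p : ℤ) - 1) := by
    rw [← prod_const, ← prod_mul_distrib]
    exact prod_congr rfl fun _ _ => by ring
  rw [hsign, mul_left_comm, ← h]
  ring

theorem sum_sq_coprime (n : ℕ) (hn : 1 < n) (m : ℕ) (hm : m = ∏ p ∈ n.primeFactors, p) :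
    ∑ a ∈ (Finset.range n).filter (fun a => Nat.Coprime a n), (a : ℝ) ^ 2 =
      (Nat.totient n : ℝ) / 6 * (2 * (n : ℝ) ^ 2 + (m : ℝ) * (-1) ^ m.primeFactors.card) := by
  have key : 6 * ∑ a ∈ range n with a.Coprime n, (a : ℤ) ^ 2 =
      n.totient * (2 * n ^ 2 + m * (-1) ^ m.primeFactors.card) := by
    rw [six_mul_sum_sq_coprime hn, mul_prod_one_sub_primeFactors, hm,
      Nat.primeFactors_prod_primeFactors]
    push_cast
    ring
  have hreal := congrArg (Int.cast (R := ℝ)) key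
  push_cast at hreal
  linarith
end

section
/- For any integer n > 1, Σ_{a ∈ U(n)} ν_n(a)·a = -n·φ(n)/4 + n·Σ_{d₁|n} Σ_{d₂|n} μ(d₁)μ(d₂)·s(n/d₁, n/d₂), where U(n) is the set of positive integers less than n coprime to n, ν_n(a) := Σ_{d|n} μ(d){a/d}, and s(b,a) := Σ_{k=1}^{a} ((kb/a))((k/a)) is the Dedekind sum. -/
open Classical

open ArithmeticFunction Finset

/-!
For `a` coprime to `n`, `a / d` with `d ∣ n` is an integer only for `d = 1`, so
`∑_{d ∣ n} μ(d) ((a/d)) = ν_n(a) + 1/2` and `((a/n)) = a/n - 1/2`. Writing `s(n/d₁, n/d₂)` as the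
sum of `((a/d₁)) ((a/n))` over the multiples `a` of `d₂` in `[1, n]`, Möbius inversion in `d₂`
restricts `a` to `U(n)`, so the double sum is `∑_{a ∈ U(n)} (ν_n(a) + 1/2) (a/n - 1/2)`.
After expanding, the remaining sums follow from the symmetry `a ↦ n - a` of `U(n)`:
`a + (n - a) = n` and `ν_n(a) + ν_n(n - a) = -1`.
-/

open scoped Nat

theorem sum_divisors_moebius_s13 {R : Type*} [Ring R] (m : ℕ) :
    ∑ d ∈ m.divisors, (moebius d : R) = if m = 1 then 1 else 0 := by
  rw [← one_apply, ← coe_moebius_mul_coe_zeta, coe_mul_zeta_apply]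
  rfl

theorem Nat.filter_dvd_divisors_eq_divisors_gcd {n : ℕ} (hn : n ≠ 0) (a : ℕ) :
    {d ∈ n.divisors | d ∣ a} = (n.gcd a).divisors := by
  ext d
  simp [Nat.dvd_gcd_iff, hn]

theorem sum_divisors_moebius_mul_sum_dvd {R : Type*} [Ring R] {n : ℕ} (hn : n ≠ 0)
    (s : Finset ℕ) (f : ℕ → R) :
    ∑ d ∈ n.divisors, (moebius d : R) * ∑ a ∈ s with d ∣ a, f a =
      ∑ a ∈ s with n.Coprime a, f a := by
  simp_rw [sum_filter, mul_sum, mul_ite, mul_zero]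
  rw [sum_comm]
  refine sum_congr rfl fun a _ => ?_
  rw [← sum_filter, ← sum_mul, Nat.filter_dvd_divisors_eq_divisors_gcd hn, sum_divisors_moebius_s13]
  simp [Nat.Coprime]

theorem dp_intCast (m : ℤ) : dp m = 0 := if_pos ⟨m, rfl⟩

theorem dp_natCast (m : ℕ) : dp m = 0 := by exact_mod_cast dp_intCast m

theorem not_exists_intCast_eq_natCast_div {a d : ℕ} (hd : d ≠ 0) (h : ¬ d ∣ a) :
    ¬ ∃ m : ℤ, (m : ℝ) = a / d := by
  rintro ⟨m, hm⟩
  rw [eq_div_iff (by exact_mod_cast hd), mul_comm] at hm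
  exact h (Int.ofNat_dvd.mp ⟨m, by exact_mod_cast hm.symm⟩)

theorem dp_natCast_div {a d : ℕ} (hd : d ≠ 0) (h : ¬ d ∣ a) :
    dp (a / d) = Int.fract ((a : ℝ) / d) - 1 / 2 :=
  if_neg (not_exists_intCast_eq_natCast_div hd h)

theorem dp_natCast_div_of_lt {a n : ℕ} (ha : 0 < a) (h : a < n) :
    dp (a / n) = a / n - 1 / 2 := by
  rw [dp_natCast_div (by omega) (Nat.not_dvd_of_pos_of_lt ha h), Int.fract_eq_self.mpr]
  exact ⟨by positivity, (div_lt_one (by exact_mod_cast ha.trans h)).mpr (by exact_mod_cast h)⟩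

theorem fract_natCast_div_add_fract_sub {a d n : ℕ} (hd : d ≠ 0) (hdn : d ∣ n) (h : ¬ d ∣ a)
    (han : a ≤ n) : Int.fract ((a : ℝ) / d) + Int.fract (((n - a : ℕ) : ℝ) / d) = 1 := by
  obtain ⟨c, rfl⟩ := hdn
  have : (((d * c - a : ℕ) : ℝ)) / d = -((a : ℝ) / d) + (c : ℤ) := by
    push_cast [han]
    field_simp
    ring
  rw [this, Int.fract_add_intCast,
    Int.fract_neg (Int.fract_ne_zero_iff.mpr (not_exists_intCast_eq_natCast_div hd h))]
  ring

def coprimeResidues (n : ℕ) : Finset ℕ := {k ∈ range n | k.Coprime n}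

section coprimeResidues

variable {n a : ℕ}

theorem mem_coprimeResidues : a ∈ coprimeResidues n ↔ a < n ∧ a.Coprime n := by
  simp [coprimeResidues]

theorem card_coprimeResidues (n : ℕ) : #(coprimeResidues n) = φ n := by
  simp [coprimeResidues, Nat.totient_eq_card_coprime, Nat.coprime_comm]

theorem pos_of_mem_coprimeResidues (hn : 1 < n) (ha : a ∈ coprimeResidues n) : 0 < a := by
  rcases mem_coprimeResidues.mp ha with ⟨-, hcop⟩
  refine Nat.pos_of_ne_zero fun h0 => ?_
  rw [h0, Nat.coprime_zero_left] at hcop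
  omega

theorem sub_mem_coprimeResidues (hn : 1 < n) (ha : a ∈ coprimeResidues n) :
    n - a ∈ coprimeResidues n := by
  have hpos := pos_of_mem_coprimeResidues hn ha
  rcases mem_coprimeResidues.mp ha with ⟨han, hcop⟩
  refine mem_coprimeResidues.mpr ⟨by omega, ?_⟩
  exact (Nat.coprime_self_sub_left han.le).mpr hcop

theorem filter_coprime_Icc_one_eq_coprimeResidues (hn : 1 < n) :
    {a ∈ Icc 1 n | n.Coprime a} = coprimeResidues n := by
  ext a
  simp only [mem_filter, mem_Icc, coprimeResidues, mem_range, Nat.coprime_comm (n := n)]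
  constructor
  · rintro ⟨⟨-, han⟩, hcop⟩
    refine ⟨lt_of_le_of_ne han ?_, hcop⟩
    rintro rfl
    rw [Nat.coprime_self] at hcop
    omega
  · rintro ⟨han, hcop⟩
    exact ⟨⟨pos_of_mem_coprimeResidues hn (mem_coprimeResidues.mpr ⟨han, hcop⟩), han.le⟩, hcop⟩

theorem sum_coprimeResidues_of_add_sub_eq (hn : 1 < n) {f : ℕ → ℝ} {c : ℝ}
    (hf : ∀ a ∈ coprimeResidues n, f a + f (n - a) = c) :
    ∑ a ∈ coprimeResidues n, f a = φ n * c / 2 := by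
  have hreflect : ∑ a ∈ coprimeResidues n, f (n - a) = ∑ a ∈ coprimeResidues n, f a :=
    sum_nbij' (n - ·) (n - ·) (fun a ha => sub_mem_coprimeResidues hn ha)
      (fun a ha => sub_mem_coprimeResidues hn ha)
      (fun a ha => by have := (mem_coprimeResidues.mp ha).1; omega)
      (fun a ha => by have := (mem_coprimeResidues.mp ha).1; omega) (fun _ _ => rfl)
  have htwice : 2 * ∑ a ∈ coprimeResidues n, f a = φ n * c := by
    rw [two_mul]
    nth_rw 2 [← hreflect]
    rw [← sum_add_distrib, sum_congr rfl hf, sum_const, card_coprimeResidues, nsmul_eq_mul]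
  linarith

theorem sum_coprimeResidues_id (hn : 1 < n) :
    ∑ a ∈ coprimeResidues n, (a : ℝ) = φ n * n / 2 :=
  sum_coprimeResidues_of_add_sub_eq hn fun a ha => by
    push_cast [(mem_coprimeResidues.mp ha).1.le]
    ring

end coprimeResidues

noncomputable def nu (n a : ℕ) : ℝ := ∑ d ∈ n.divisors, (moebius d : ℝ) * Int.fract ((a : ℝ) / d)

section nu

variable {n a : ℕ}

theorem moebius_mul_dp_natCast_div_of_coprime {d : ℕ} (hd : d ∈ n.divisors) (ha : a.Coprime n) :
    (moebius d : ℝ) * dp (a / d) =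
      (moebius d : ℝ) * (Int.fract ((a : ℝ) / d) - 1 / 2) + if d = 1 then 1 / 2 else 0 := by
  obtain ⟨hdn, hn⟩ := Nat.mem_divisors.mp hd
  split_ifs with hd1
  · subst hd1
    simp [dp_natCast]
  · have hda : ¬ d ∣ a := fun hda => hd1 (Nat.eq_one_of_dvd_coprimes ha hda hdn)
    rw [dp_natCast_div (ne_zero_of_dvd_ne_zero hn hdn) hda, add_zero]

theorem sum_moebius_mul_dp_natCast_div_of_coprime (hn : 1 < n) (ha : a.Coprime n) :
    ∑ d ∈ n.divisors, (moebius d : ℝ) * dp (a / d) = nu n a + 1 / 2 := by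
  simp_rw [sum_congr rfl fun d hd => moebius_mul_dp_natCast_div_of_coprime hd ha, mul_sub,
    sum_add_distrib, sum_sub_distrib, ← sum_mul, sum_divisors_moebius_s13, if_neg hn.ne',
    sum_ite_eq', if_pos (Nat.one_mem_divisors.mpr (by omega : n ≠ 0))]
  rw [nu]
  ring

theorem nu_add_nu_sub (hn : 1 < n) (ha : a ∈ coprimeResidues n) : nu n a + nu n (n - a) = -1 := by
  obtain ⟨han, hcop⟩ := mem_coprimeResidues.mp ha
  have hterm : ∀ d ∈ n.divisors, (moebius d : ℝ) * Int.fract ((a : ℝ) / d) +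
      (moebius d : ℝ) * Int.fract (((n - a : ℕ) : ℝ) / d) =
        (moebius d : ℝ) - if d = 1 then 1 else 0 := by
    intro d hd
    obtain ⟨hdn, hn⟩ := Nat.mem_divisors.mp hd
    rw [← mul_add]
    split_ifs with hd1
    · subst hd1
      simp
    · have hda : ¬ d ∣ a := fun hda => hd1 (Nat.eq_one_of_dvd_coprimes hcop hda hdn)
      rw [fract_natCast_div_add_fract_sub (ne_zero_of_dvd_ne_zero hn hdn) hdn hda han.le]
      ring
  rw [nu, nu, ← sum_add_distrib, sum_congr rfl hterm, sum_sub_distrib, sum_divisors_moebius_s13,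
    if_neg hn.ne', sum_ite_eq', if_pos (Nat.one_mem_divisors.mpr (by omega))]
  ring

theorem sum_coprimeResidues_nu (hn : 1 < n) : ∑ a ∈ coprimeResidues n, nu n a = -(φ n / 2) := by
  rw [sum_coprimeResidues_of_add_sub_eq (f := nu n) hn fun a ha => nu_add_nu_sub hn ha]
  ring

end nu

theorem ded_div_div {n d₁ d₂ : ℕ} (hn : n ≠ 0) (hd₁ : d₁ ∣ n) (hd₂ : d₂ ∣ n) :
    ded (n / d₁) (n / d₂) = ∑ a ∈ Icc 1 n with d₂ ∣ a, dp (a / d₁) * dp (a / n) := by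
  have hd₁0 : (d₁ : ℝ) ≠ 0 := by exact_mod_cast ne_zero_of_dvd_ne_zero hn hd₁
  have hd₂0 : d₂ ≠ 0 := ne_zero_of_dvd_ne_zero hn hd₂
  have hn0 : (n : ℝ) ≠ 0 := by exact_mod_cast hn
  refine sum_nbij' (· * d₂) (· / d₂) (fun k hk => ?_) (fun a ha => ?_)
    (fun k _ => Nat.mul_div_cancel k (Nat.pos_of_ne_zero hd₂0))
    (fun a ha => Nat.div_mul_cancel (mem_filter.mp ha).2) (fun k _ => ?_)
  · simp only [mem_Icc, mem_filter] at hk ⊢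
    refine ⟨⟨Nat.mul_pos hk.1 (Nat.pos_of_ne_zero hd₂0), ?_⟩, dvd_mul_left _ _⟩
    exact (Nat.le_div_iff_mul_le (Nat.pos_of_ne_zero hd₂0)).mp hk.2
  · simp only [mem_Icc, mem_filter] at ha ⊢
    exact ⟨Nat.div_pos (Nat.le_of_dvd ha.1.1 ha.2) (Nat.pos_of_ne_zero hd₂0),
      Nat.div_le_div_right ha.1.2⟩
  · rw [Nat.cast_div hd₁ hd₁0, Nat.cast_div hd₂ (by exact_mod_cast hd₂0)]
    push_cast
    field_simp

theorem sum_moebius_mul_moebius_mul_ded {n : ℕ} (hn : 1 < n) :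
    ∑ d₁ ∈ n.divisors, ∑ d₂ ∈ n.divisors,
        (moebius d₁ : ℝ) * (moebius d₂ : ℝ) * ded (n / d₁) (n / d₂) =
      ∑ a ∈ coprimeResidues n, (nu n a + 1 / 2) * (a / n - 1 / 2) := by
  have hn0 : n ≠ 0 := by omega
  calc _ = ∑ d₁ ∈ n.divisors, (moebius d₁ : ℝ) *
          ∑ a ∈ coprimeResidues n, dp (a / d₁) * dp (a / n) := by
        refine sum_congr rfl fun d₁ hd₁ => ?_
        simp_rw [mul_assoc, ← mul_sum]
        rw [sum_congr rfl fun d₂ hd₂ => by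
            rw [ded_div_div hn0 (Nat.dvd_of_mem_divisors hd₁) (Nat.dvd_of_mem_divisors hd₂)],
          sum_divisors_moebius_mul_sum_dvd hn0, filter_coprime_Icc_one_eq_coprimeResidues hn]
    _ = ∑ a ∈ coprimeResidues n, (∑ d₁ ∈ n.divisors, (moebius d₁ : ℝ) * dp (a / d₁)) *
          dp (a / n) := by
        simp_rw [mul_sum, sum_mul, mul_assoc]
        exact sum_comm
    _ = _ := sum_congr rfl fun a ha => by
        obtain ⟨han, hcop⟩ := mem_coprimeResidues.mp ha
        rw [sum_moebius_mul_dp_natCast_div_of_coprime hn hcop,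
          dp_natCast_div_of_lt (pos_of_mem_coprimeResidues hn ha) han]

theorem sum_nu_mul (n : ℕ) (hn : 1 < n) :
    ∑ a ∈ (Finset.range n).filter (fun k => Nat.Coprime k n),
        (∑ d ∈ n.divisors, (moebius d : ℝ) * Int.fract ((a : ℝ) / d)) * (a : ℝ) =
      -(n : ℝ) * (Nat.totient n : ℝ) / 4 +
        (n : ℝ) * ∑ d₁ ∈ n.divisors, ∑ d₂ ∈ n.divisors,
          (moebius d₁ : ℝ) * (moebius d₂ : ℝ) * ded (n / d₁) (n / d₂) := by
  change ∑ a ∈ coprimeResidues n, nu n a * a = _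
  have hn0 : (n : ℝ) ≠ 0 := Nat.cast_ne_zero.mpr (by omega)
  have hexpand : ∀ a : ℕ, n * ((nu n a + 1 / 2) * (a / n - 1 / 2)) =
      nu n a * a - n / 2 * nu n a + (1 / 2 * a - n / 4) := fun a => by
    field_simp
    ring
  rw [sum_moebius_mul_moebius_mul_ded hn, mul_sum, sum_congr rfl fun a _ => hexpand a,
    sum_add_distrib, sum_sub_distrib, sum_sub_distrib, ← mul_sum, ← mul_sum, sum_const,
    card_coprimeResidues, nsmul_eq_mul, sum_coprimeResidues_nu hn, sum_coprimeResidues_id hn]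
  ring
end
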